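/- Let P be a K×K row-stochastic real matrix, μ a probability vector on {1,…,K}, a₀, a₁ : {1,…,K} → ℝ, and λ = max_{1≤k≤K} Σ_{j=1}^{K} P_{kj} a₁(j)². Let (Z_t)_{t≥1} be a Markov chain on {1,…,K} with transition matrix P and initial distribution μ, and for m ≥ 0 set A_m = (Π_{i=2}^{m+1} a₁(Z_i)) · a₀(Z₁). If λ < 1, then for every t ≥ 1, E[(Σ_{m=0}^{t-1} A_m)²] ≤ 2 · ((1 + μ′ φ₀² 𝟙) / (1 − λ^{1/2}))², where μ′ φ₀² 𝟙 = Σ_{k=1}^{K} μ_k a₀(k)². -/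

import Mathlib

/-!
Writing `A_m = a₀(Z₁) a₁(Z₂) ⋯ a₁(Z_{m+1})` and summing out the last state of the path, the
Markov property gives `E[A_{m+1}²] ≤ λ E[A_m²]`, hence `E[A_m²] ≤ λ^m ∑ₖ μₖ a₀(k)²`.
Minkowski's inequality in `L²` then bounds the `L²` norm of `∑_{m<t} A_m` by the geometric
series `∑ₘ λ^{m/2} (∑ₖ μₖ a₀(k)²)^{1/2} ≤ (∑ₖ μₖ a₀(k)²)^{1/2} / (1 - √λ)`.
-/

open MeasureTheory Finset

lemma Finset.prod_Icc_one_eq_prod_fin {M : Type*} [CommMonoid M] (f : ℕ → M) (m : ℕ) :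
    ∏ i ∈ Icc 1 m, f i = ∏ i : Fin m, f (i + 1) := by
  rw [Fin.prod_univ_eq_prod_range (fun i => f (i + 1)), ← Ico_add_one_right_eq_Icc,
    prod_Ico_eq_prod_range, Nat.add_sub_cancel]
  simp only [add_comm]

section L2

variable {Ω ι : Type*} [MeasurableSpace Ω] {μ : Measure Ω}

lemma MeasureTheory.MemLp.toReal_eLpNorm_two {f : Ω → ℝ} (hf : MemLp f 2 μ) :
    (eLpNorm f 2 μ).toReal = √(∫ ω, f ω ^ 2 ∂μ) := by
  rw [hf.eLpNorm_eq_integral_rpow_norm two_ne_zero ENNReal.ofNat_ne_top,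
    ENNReal.toReal_ofReal (by positivity), Real.sqrt_eq_rpow]
  simp

lemma sqrt_integral_sq_sum_le (s : Finset ι) {f : ι → Ω → ℝ} (hf : ∀ i ∈ s, MemLp (f i) 2 μ) :
    √(∫ ω, (∑ i ∈ s, f i ω) ^ 2 ∂μ) ≤ ∑ i ∈ s, √(∫ ω, f i ω ^ 2 ∂μ) := by
  have hsum := memLp_finsetSum' s hf
  calc √(∫ ω, (∑ i ∈ s, f i ω) ^ 2 ∂μ) = (eLpNorm (∑ i ∈ s, f i) 2 μ).toReal := by
        rw [hsum.toReal_eLpNorm_two]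
        simp only [Finset.sum_apply]
    _ ≤ (∑ i ∈ s, eLpNorm (f i) 2 μ).toReal :=
        ENNReal.toReal_mono (ENNReal.sum_ne_top.2 fun i hi => (hf i hi).eLpNorm_ne_top)
          (eLpNorm_sum_le (fun i hi => (hf i hi).1) one_le_two)
    _ = ∑ i ∈ s, √(∫ ω, f i ω ^ 2 ∂μ) := by
        rw [ENNReal.toReal_sum fun i hi => (hf i hi).eLpNorm_ne_top]
        exact sum_congr rfl fun i hi => (hf i hi).toReal_eLpNorm_two

lemma integral_sq_sum_range_le_of_geometric {f : ℕ → Ω → ℝ} (hf : ∀ m, MemLp (f m) 2 μ)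
    {r c : ℝ} (hr₀ : 0 ≤ r) (hr₁ : r < 1) (hc : 0 ≤ c)
    (hfm : ∀ m, √(∫ ω, f m ω ^ 2 ∂μ) ≤ r ^ m * c) (t : ℕ) :
    ∫ ω, (∑ m ∈ range t, f m ω) ^ 2 ∂μ ≤ (c / (1 - r)) ^ 2 := by
  refine (Real.sqrt_le_left (by have := sub_pos.2 hr₁; positivity)).1 ?_
  calc √(∫ ω, (∑ m ∈ range t, f m ω) ^ 2 ∂μ)
      ≤ ∑ m ∈ range t, √(∫ ω, f m ω ^ 2 ∂μ) := sqrt_integral_sq_sum_le _ fun m _ => hf m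
    _ ≤ (∑ m ∈ Ico 0 t, r ^ m) * c := by
        rw [← range_eq_Ico, sum_mul]
        exact sum_le_sum fun m _ => hfm m
    _ ≤ r ^ 0 / (1 - r) * c := by gcongr; exact geom_sum_Ico_le_of_lt_one hr₀ hr₁
    _ = c / (1 - r) := by ring

end L2

namespace MarkovChain

variable {α : Type*}

def pathProb (μ₀ : α → ℝ) (P : α → α → ℝ) (n : ℕ) (z : Fin (n + 1) → α) : ℝ :=
  μ₀ (z 0) * ∏ i : Fin n, P (z i.castSucc) (z i.succ)

def pathWeight (a₀ a₁ : α → ℝ) (n : ℕ) (z : Fin (n + 1) → α) : ℝ :=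
  a₀ (z 0) * ∏ i : Fin n, a₁ (z i.succ)

def trajectory {Ω : Type*} (Z : ℕ → Ω → α) (n : ℕ) (ω : Ω) : Fin (n + 1) → α := fun i => Z i ω

variable {μ₀ : α → ℝ} {P : α → α → ℝ}

lemma pathProb_nonneg (hμ₀ : ∀ k, 0 ≤ μ₀ k) (hP : ∀ i j, 0 ≤ P i j) {n : ℕ}
    (z : Fin (n + 1) → α) : 0 ≤ pathProb μ₀ P n z :=
  mul_nonneg (hμ₀ _) (prod_nonneg fun _ _ => hP _ _)

lemma pathProb_snoc {n : ℕ} (y : Fin (n + 1) → α) (k : α) :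
    pathProb μ₀ P (n + 1) (Fin.snoc y k) = pathProb μ₀ P n y * P (y (Fin.last n)) k := by
  simp only [pathProb, Fin.prod_univ_castSucc, ← Fin.castSucc_zero, Fin.snoc_castSucc,
    Fin.succ_castSucc, Fin.succ_last, Fin.snoc_last, mul_assoc]

lemma pathWeight_snoc (a₀ a₁ : α → ℝ) {n : ℕ} (y : Fin (n + 1) → α) (k : α) :
    pathWeight a₀ a₁ (n + 1) (Fin.snoc y k) = pathWeight a₀ a₁ n y * a₁ k := by
  simp only [pathWeight, Fin.prod_univ_castSucc, ← Fin.castSucc_zero, Fin.snoc_castSucc,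
    Fin.succ_castSucc, Fin.succ_last, Fin.snoc_last, mul_assoc]

lemma measurable_trajectory {Ω : Type*} [MeasurableSpace Ω] [MeasurableSpace α]
    {Z : ℕ → Ω → α} (hZ : ∀ t, Measurable (Z t)) (n : ℕ) : Measurable (trajectory Z n) :=
  measurable_pi_lambda _ fun i => hZ i

variable [Fintype α]

lemma sum_fun_fin_succ_eq_sum_snoc {M : Type*} [AddCommMonoid M] {n : ℕ}
    (F : (Fin (n + 1) → α) → M) : ∑ z, F z = ∑ y : Fin n → α, ∑ k, F (Fin.snoc y k) := by
  rw [← Fintype.sum_prod_type_right fun p : α × (Fin n → α) => F (Fin.snoc p.2 p.1)]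
  exact (Fintype.sum_equiv (Fin.snocEquiv fun _ => α) _ _ fun _ => rfl).symm

section SecondMoment

variable (hμ₀ : ∀ k, 0 ≤ μ₀ k) (hP : ∀ i j, 0 ≤ P i j) {a₀ a₁ : α → ℝ} {lam : ℝ}
  (hlam : ∀ j, ∑ k, P j k * a₁ k ^ 2 ≤ lam)
include hμ₀ hP hlam

lemma sum_pathProb_mul_pathWeight_sq_succ_le (n : ℕ) :
    ∑ z, pathProb μ₀ P (n + 1) z * pathWeight a₀ a₁ (n + 1) z ^ 2
      ≤ lam * ∑ y, pathProb μ₀ P n y * pathWeight a₀ a₁ n y ^ 2 := by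
  calc ∑ z, pathProb μ₀ P (n + 1) z * pathWeight a₀ a₁ (n + 1) z ^ 2
      = ∑ y, pathProb μ₀ P n y * pathWeight a₀ a₁ n y ^ 2 *
          ∑ k, P (y (Fin.last n)) k * a₁ k ^ 2 := by
        rw [sum_fun_fin_succ_eq_sum_snoc]
        refine sum_congr rfl fun y _ => ?_
        rw [mul_sum]
        refine sum_congr rfl fun k _ => ?_
        rw [pathProb_snoc, pathWeight_snoc]
        ring
    _ ≤ ∑ y, pathProb μ₀ P n y * pathWeight a₀ a₁ n y ^ 2 * lam := by
        gcongr with y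
        · exact mul_nonneg (pathProb_nonneg hμ₀ hP y) (sq_nonneg _)
        · exact hlam _
    _ = lam * ∑ y, pathProb μ₀ P n y * pathWeight a₀ a₁ n y ^ 2 := by
        rw [← sum_mul, mul_comm]

lemma sum_pathProb_mul_pathWeight_sq_le (hlam₀ : 0 ≤ lam) (n : ℕ) :
    ∑ z, pathProb μ₀ P n z * pathWeight a₀ a₁ n z ^ 2 ≤ lam ^ n * ∑ k, μ₀ k * a₀ k ^ 2 := by
  induction n with
  | zero =>
    rw [pow_zero, one_mul]
    exact le_of_eq <| Fintype.sum_equiv (Equiv.funUnique (Fin 1) α) _ _ fun z => by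
      simp [pathProb, pathWeight]
  | succ n ih =>
    calc _ ≤ lam * ∑ y, pathProb μ₀ P n y * pathWeight a₀ a₁ n y ^ 2 :=
          sum_pathProb_mul_pathWeight_sq_succ_le hμ₀ hP hlam n
      _ ≤ lam * (lam ^ n * ∑ k, μ₀ k * a₀ k ^ 2) := by gcongr
      _ = lam ^ (n + 1) * ∑ k, μ₀ k * a₀ k ^ 2 := by ring

end SecondMoment

section Trajectory

variable {Ω : Type*} [MeasurableSpace Ω] [MeasurableSpace α] [MeasurableSingletonClass α]
  {μ : Measure Ω} [IsFiniteMeasure μ] {Z : ℕ → Ω → α}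

lemma memLp_comp_trajectory (hZ : ∀ t, Measurable (Z t)) (p : ENNReal) (n : ℕ)
    (g : (Fin (n + 1) → α) → ℝ) : MemLp (fun ω => g (trajectory Z n ω)) p μ :=
  MemLp.of_discrete.comp_of_map (measurable_trajectory hZ n).aemeasurable

lemma integral_comp_trajectory (hμ₀ : ∀ k, 0 ≤ μ₀ k) (hP : ∀ i j, 0 ≤ P i j)
    (hZ : ∀ t, Measurable (Z t))
    (hlaw : ∀ (n : ℕ) (z : Fin (n + 1) → α),
      μ {ω | ∀ i : Fin (n + 1), Z i ω = z i} = ENNReal.ofReal (pathProb μ₀ P n z))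
    (n : ℕ) (g : (Fin (n + 1) → α) → ℝ) :
    ∫ ω, g (trajectory Z n ω) ∂μ = ∑ z, pathProb μ₀ P n z * g z := by
  have hV := measurable_trajectory hZ n
  rw [← integral_map hV.aemeasurable (measurable_of_finite g).aestronglyMeasurable,
    integral_fintype .of_finite]
  refine sum_congr rfl fun z _ => ?_
  have hpre : trajectory Z n ⁻¹' {z} = {ω | ∀ i : Fin (n + 1), Z i ω = z i} := by
    ext ω
    simp [trajectory, funext_iff]
  rw [measureReal_def, Measure.map_apply hV (measurableSet_singleton z), hpre, hlaw,
    ENNReal.toReal_ofReal (pathProb_nonneg hμ₀ hP z), smul_eq_mul]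

end Trajectory

end MarkovChain

open MarkovChain in
theorem stmt_11_general (K : ℕ) (P : Matrix (Fin K) (Fin K) ℝ)
    (hP0 : ∀ i j, 0 ≤ P i j)
    (μvec : Fin K → ℝ) (hμ0 : ∀ k, 0 ≤ μvec k)
    (a₀ a₁ : Fin K → ℝ) (lam : ℝ)
    (hlam : IsGreatest (Set.range fun k : Fin K => ∑ j, P k j * a₁ j ^ 2) lam)
    (hlt : lam < 1)
    {Ω : Type*} [MeasurableSpace Ω] (μpr : Measure Ω) [IsProbabilityMeasure μpr]
    (Z : ℕ → Ω → Fin K) (hZmeas : ∀ t, Measurable (Z t))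
    (hZ : ∀ (n : ℕ) (z : Fin (n + 1) → Fin K),
      μpr {ω | ∀ i : Fin (n + 1), Z i ω = z i} =
        ENNReal.ofReal (μvec (z 0) * ∏ i : Fin n, P (z i.castSucc) (z i.succ)))
    (A : ℕ → Ω → ℝ)
    (hA : ∀ m ω, A m ω = (∏ i ∈ Finset.Icc 1 m, a₁ (Z i ω)) * a₀ (Z 0 ω))
    (t : ℕ) :
    ∫ ω, (∑ m ∈ Finset.range t, A m ω) ^ 2 ∂μpr
      ≤ 2 * ((1 + ∑ k, μvec k * a₀ k ^ 2) / (1 - Real.sqrt lam)) ^ 2 := by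
  have hlam_le : ∀ k, ∑ j, P k j * a₁ j ^ 2 ≤ lam := fun k => hlam.2 ⟨k, rfl⟩
  have hlam₀ : 0 ≤ lam := by
    obtain ⟨k, rfl⟩ := hlam.1
    exact sum_nonneg fun j _ => mul_nonneg (hP0 k j) (sq_nonneg _)
  set S := ∑ k, μvec k * a₀ k ^ 2
  have hS : 0 ≤ S := sum_nonneg fun k _ => mul_nonneg (hμ0 k) (sq_nonneg _)
  have hA_traj : ∀ m, A m = fun ω => pathWeight a₀ a₁ m (trajectory Z m ω) := fun m =>
    funext fun ω => by
      rw [hA, prod_Icc_one_eq_prod_fin, pathWeight, mul_comm]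
      simp only [trajectory, Fin.val_succ, Fin.val_zero]
  have hA_L2 : ∀ m, √(∫ ω, A m ω ^ 2 ∂μpr) ≤ √lam ^ m * √S := fun m => by
    rw [Real.sqrt_le_left (by positivity), hA_traj,
      integral_comp_trajectory hμ0 hP0 hZmeas hZ m (fun z => pathWeight a₀ a₁ m z ^ 2),
      mul_pow, ← pow_mul, mul_comm m, pow_mul, Real.sq_sqrt hlam₀, Real.sq_sqrt hS]
    exact sum_pathProb_mul_pathWeight_sq_le hμ0 hP0 hlam_le hlam₀ m
  have hr : √lam < 1 := (Real.sqrt_lt' one_pos).2 (by rwa [one_pow])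
  calc _ ≤ (√S / (1 - √lam)) ^ 2 :=
        integral_sq_sum_range_le_of_geometric
          (fun m => hA_traj m ▸ memLp_comp_trajectory hZmeas 2 m _)
          (Real.sqrt_nonneg _) hr (Real.sqrt_nonneg _) hA_L2 t
    _ = S / (1 - √lam) ^ 2 := by rw [div_pow, Real.sq_sqrt hS]
    _ ≤ 2 * (1 + S) ^ 2 / (1 - √lam) ^ 2 := by gcongr; nlinarith
    _ = 2 * ((1 + S) / (1 - √lam)) ^ 2 := by rw [div_pow, mul_div_assoc]

/-- With `A_m = (∏_{i=2}^{m+1} a₁(Z_i)) a₀(Z₁)` and `λ = max_k ∑_j P k j a₁(j)² < 1`,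
for every `t ≥ 1`, `E[(∑_{m=0}^{t-1} A_m)²] ≤ 2 ((1 + ∑_k μ_k a₀(k)²) / (1 - √λ))²`.
Here `Z n` stands for `Z_{n+1}`. -/
theorem stmt_11 (K : ℕ) (P : Matrix (Fin K) (Fin K) ℝ)
    (hP0 : ∀ i j, 0 ≤ P i j) (hP1 : ∀ i, ∑ j, P i j = 1)
    (μvec : Fin K → ℝ) (hμ0 : ∀ k, 0 ≤ μvec k) (hμ1 : ∑ k, μvec k = 1)
    (a₀ a₁ : Fin K → ℝ) (lam : ℝ)
    (hlam : IsGreatest (Set.range fun k : Fin K => ∑ j, P k j * a₁ j ^ 2) lam)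
    (hlt : lam < 1)
    {Ω : Type*} [MeasurableSpace Ω] (μpr : Measure Ω) [IsProbabilityMeasure μpr]
    (Z : ℕ → Ω → Fin K) (hZmeas : ∀ t, Measurable (Z t))
    (hZ : ∀ (n : ℕ) (z : Fin (n + 1) → Fin K),
      μpr {ω | ∀ i : Fin (n + 1), Z i ω = z i} =
        ENNReal.ofReal (μvec (z 0) * ∏ i : Fin n, P (z i.castSucc) (z i.succ)))
    (A : ℕ → Ω → ℝ)
    (hA : ∀ m ω, A m ω = (∏ i ∈ Finset.Icc 1 m, a₁ (Z i ω)) * a₀ (Z 0 ω))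
    (t : ℕ) (ht : 1 ≤ t) :
    ∫ ω, (∑ m ∈ Finset.range t, A m ω) ^ 2 ∂μpr
      ≤ 2 * ((1 + ∑ k, μvec k * a₀ k ^ 2) / (1 - Real.sqrt lam)) ^ 2 :=
  stmt_11_general K P hP0 μvec hμ0 a₀ a₁ lam hlam hlt μpr Z hZmeas hZ A hA t
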